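/- arXiv:2210.01230 — 3 statements merged into one kernel-verified Lean document; each statement's English description precedes it below -/
import Mathlib

section
/- Record sampling representation of precision: if a random record i is drawn from D with probabilities p_i > 0 summing to 1, then pairwise precision P = E[ g(c(i), 𝒞̂) / (p_i · |c(i)|) ], where g(c, 𝒞̂) = (Σ_{ĉ ∈ 𝒞̂} C(|c ∩ ĉ|, 2)) / (Σ_{ĉ ∈ 𝒞̂} C(|ĉ|, 2)). -/
/-! A pair of distinct records is matched by both partitions iff it lies in `c ∩ ĉ` for a
(necessarily unique) pair of blocks `c ∈ 𝒞`, `ĉ ∈ 𝒞̂`, so `|𝒯 ∩ 𝒫| = Σ_c f(c, 𝒞̂)` and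
`P = Σ_c g(c, 𝒞̂)`. On the other side `p_i` cancels, and the records of a true block `c`
contribute `|c|` copies of `g(c, 𝒞̂) / |c|`. -/

open Finset

/-- The set of unordered pairs of distinct elements lying in a common block of `P`. -/
def clPairs {α : Type*} [DecidableEq α] (P : Finset (Finset α)) : Finset (Sym2 α) :=
  (P.sup fun c => c.sym2).filter (fun p => ¬ p.IsDiag)

/-- The block of the partition `P` containing `i`. -/
def partOf {α : Type*} [DecidableEq α] (P : Finset (Finset α)) (i : α) : Finset α :=
  (P.filter (fun c => i ∈ c)).sup id

/-- `f(c, 𝒞̂) = Σ_{ĉ ∈ 𝒞̂} C(|c ∩ ĉ|, 2)`, real-valued. -/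
noncomputable def ffun {α : Type*} [DecidableEq α] (Cp : Finset (Finset α)) (c : Finset α) : ℝ :=
  ∑ d ∈ Cp, ((c ∩ d).card.choose 2 : ℝ)

/-- `g(c, 𝒞̂) = f(c, 𝒞̂) / Σ_{ĉ ∈ 𝒞̂} C(|ĉ|, 2)`. -/
noncomputable def gfun {α : Type*} [DecidableEq α] (Cp : Finset (Finset α)) (c : Finset α) : ℝ :=
  ffun Cp c / (∑ d ∈ Cp, (d.card.choose 2 : ℝ))

namespace Finset

variable {α : Type*}

lemma disjoint_sym2 {s t : Finset α} (h : Disjoint s t) : Disjoint s.sym2 t.sym2 := by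
  rw [disjoint_left]
  intro z hs ht
  induction z using Sym2.ind with
  | _ a b => exact disjoint_left.mp h (mk_mem_sym2_iff.mp hs).1 (mk_mem_sym2_iff.mp ht).1

variable [DecidableEq α]

lemma filter_isDiag_sym2 (s : Finset α) : s.sym2.filter Sym2.IsDiag = s.image Sym2.diag := by
  ext z
  induction z using Sym2.ind with
  | _ a b =>
    simp only [mem_filter, mk_mem_sym2_iff, Sym2.mk_isDiag_iff, mem_image, Sym2.diag,
      Sym2.eq_iff]
    constructor
    · rintro ⟨⟨ha, -⟩, rfl⟩
      exact ⟨a, ha, by simp⟩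
    · rintro ⟨x, hx, ⟨rfl, rfl⟩ | ⟨rfl, rfl⟩⟩ <;> exact ⟨⟨hx, hx⟩, rfl⟩

lemma card_filter_not_isDiag_sym2 (s : Finset α) :
    #(s.sym2.filter fun z => ¬ z.IsDiag) = (#s).choose 2 := by
  have hsplit := s.sym2.card_filter_add_card_filter_not Sym2.IsDiag
  rw [filter_isDiag_sym2, card_image_of_injective _ Sym2.diag_injective, card_sym2,
    Nat.choose_succ_succ', one_add_one_eq_two, Nat.choose_one_right] at hsplit
  omega

lemma card_filter_not_isDiag_biUnion_sym2 {ι : Type*} {I : Finset ι} {t : ι → Finset α}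
    (ht : (I : Set ι).PairwiseDisjoint t) :
    #((I.biUnion fun i => (t i).sym2).filter fun z => ¬ z.IsDiag)
      = ∑ i ∈ I, (#(t i)).choose 2 := by
  rw [filter_biUnion, card_biUnion]
  · exact sum_congr rfl fun i _ => card_filter_not_isDiag_sym2 (t i)
  · intro i hi j hj hij
    exact (disjoint_sym2 (ht hi hj hij)).mono (filter_subset _ _) (filter_subset _ _)

end Finset

section ClusterPairs

variable {α : Type*} [DecidableEq α]

lemma clPairs_eq_filter_biUnion (P : Finset (Finset α)) :
    clPairs P = (P.biUnion fun c => c.sym2).filter fun z => ¬ z.IsDiag := by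
  rw [clPairs, sup_eq_biUnion]

lemma clPairs_inter_clPairs (P Q : Finset (Finset α)) :
    clPairs P ∩ clPairs Q
      = ((P ×ˢ Q).biUnion fun cd => (cd.1 ∩ cd.2).sym2).filter fun z => ¬ z.IsDiag := by
  ext z
  simp only [clPairs_eq_filter_biUnion, mem_inter, mem_filter, mem_biUnion, mem_product,
    mem_sym2_iff, Prod.exists]
  constructor
  · rintro ⟨⟨⟨c, hc, hzc⟩, hz⟩, ⟨d, hd, hzd⟩, -⟩
    exact ⟨⟨c, d, ⟨hc, hd⟩, fun a ha => ⟨hzc a ha, hzd a ha⟩⟩, hz⟩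
  · rintro ⟨⟨c, d, ⟨hc, hd⟩, hzcd⟩, hz⟩
    exact ⟨⟨⟨c, hc, fun a ha => (hzcd a ha).1⟩, hz⟩,
      ⟨d, hd, fun a ha => (hzcd a ha).2⟩, hz⟩

lemma card_clPairs {P : Finset (Finset α)} (hP : (P : Set (Finset α)).PairwiseDisjoint id) :
    #(clPairs P) = ∑ c ∈ P, (#c).choose 2 := by
  rw [clPairs_eq_filter_biUnion]
  exact card_filter_not_isDiag_biUnion_sym2 hP

lemma card_clPairs_inter_clPairs {P Q : Finset (Finset α)}
    (hP : (P : Set (Finset α)).PairwiseDisjoint id)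
    (hQ : (Q : Set (Finset α)).PairwiseDisjoint id) :
    #(clPairs P ∩ clPairs Q) = ∑ c ∈ P, ∑ d ∈ Q, (#(c ∩ d)).choose 2 := by
  rw [clPairs_inter_clPairs, card_filter_not_isDiag_biUnion_sym2, sum_product]
  rintro ⟨c, d⟩ hcd ⟨c', d'⟩ hcd' hne
  simp only [coe_product, Set.mem_prod, mem_coe] at hcd hcd'
  by_cases hc : c = c'
  · have hd : d ≠ d' := fun hd => hne (by rw [hc, hd])
    exact (hQ hcd.2 hcd'.2 hd).mono inter_subset_right inter_subset_right
  · exact (hP hcd.1 hcd'.1 hc).mono inter_subset_left inter_subset_left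

end ClusterPairs

namespace Finpartition

variable {α : Type*} [DecidableEq α] {D : Finset α}

lemma partOf_parts_eq_part (C : Finpartition D) (i : α) : partOf C.parts i = C.part i := by
  by_cases hi : i ∈ D
  · have hfilter : C.parts.filter (fun c => i ∈ c) = {C.part i} := by
      ext c
      simp only [mem_filter, mem_singleton]
      constructor
      · rintro ⟨hc, hic⟩
        exact (C.part_eq_of_mem hc hic).symm
      · rintro rfl
        exact ⟨C.part_mem.mpr hi, C.mem_part_self.mpr hi⟩
    rw [partOf, hfilter, sup_singleton, id]
  · have hfilter : C.parts.filter (fun c => i ∈ c) = ∅ :=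
      filter_eq_empty_iff.mpr fun c hc hic => hi (C.le hc hic)
    rw [partOf, hfilter, sup_empty, C.part_eq_empty.mpr hi]
    rfl

lemma sum_div_card_part {K : Type*} [Semifield K] [CharZero K] (C : Finpartition D)
    (h : Finset α → K) :
    ∑ i ∈ D, h (C.part i) / #(C.part i) = ∑ c ∈ C.parts, h c := by
  calc ∑ i ∈ D, h (C.part i) / #(C.part i)
      = ∑ i ∈ C.parts.biUnion id, h (C.part i) / #(C.part i) := by rw [C.biUnion_parts]
    _ = ∑ c ∈ C.parts, ∑ i ∈ c, h (C.part i) / #(C.part i) := sum_biUnion C.disjoint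
    _ = ∑ c ∈ C.parts, h c := sum_congr rfl fun c hc => ?_
  have hcard : (#c : K) ≠ 0 := Nat.cast_ne_zero.mpr (C.nonempty_of_mem_parts hc).card_ne_zero
  rw [sum_congr rfl fun i hi => by rw [C.part_eq_of_mem hc hi], sum_const, nsmul_eq_mul,
    mul_div_cancel₀ _ hcard]

end Finpartition

theorem stmt3_general {α : Type*} [DecidableEq α] (D : Finset α) (C Cp : Finpartition D)
    (p : α → ℝ) (hp : ∀ i ∈ D, 0 < p i) :
    ((clPairs C.parts ∩ clPairs Cp.parts).card : ℝ) / (clPairs Cp.parts).card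
      = ∑ i ∈ D, p i *
          (gfun Cp.parts (partOf C.parts i) / (p i * (partOf C.parts i).card)) := by
  rw [card_clPairs_inter_clPairs C.disjoint Cp.disjoint, card_clPairs Cp.disjoint]
  calc _ = ∑ c ∈ C.parts, gfun Cp.parts c := by
          push_cast
          rw [sum_div]
          rfl
    _ = ∑ i ∈ D, gfun Cp.parts (C.part i) / #(C.part i) := (C.sum_div_card_part _).symm
    _ = _ := sum_congr rfl fun i hi => by
          rw [C.partOf_parts_eq_part, mul_div_assoc', mul_div_mul_left _ _ (hp i hi).ne']

theorem stmt3 {α : Type*} [DecidableEq α] (D : Finset α) (C Cp : Finpartition D)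
    (p : α → ℝ) (hp : ∀ i ∈ D, 0 < p i) (hsum : ∑ i ∈ D, p i = 1)
    (hpred : 0 < ∑ d ∈ Cp.parts, (d.card.choose 2 : ℝ)) :
    ((clPairs C.parts ∩ clPairs Cp.parts).card : ℝ) / (clPairs Cp.parts).card
      = ∑ i ∈ D, p i *
          (gfun Cp.parts (partOf C.parts i) / (p i * (partOf C.parts i).card)) :=
  stmt3_general D C Cp p hp
end

section
/- Block sampling representation of recall: if blocks b are drawn from a partition 𝓑 of D (with every true cluster contained in a block) with probabilities proportional to p_b > 0, then R = E[ |𝒯_b ∩ 𝒫_b| / p_b ] / E[ |𝒯_b| / p_b ], provided |𝒯| > 0. -/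
open Finset

theorem stmt10 {α : Type*} [DecidableEq α] (D : Finset α) (C Cp B : Finpartition D)
    (hB : ∀ c ∈ C.parts, ∃ b ∈ B.parts, c ⊆ b)
    (T Pp : Finset (Sym2 α)) (hT : T = clPairs C.parts) (hPp : Pp = clPairs Cp.parts)
    (hTpos : T.Nonempty)
    (w : Finset α → ℝ) (hw : ∀ b ∈ B.parts, 0 < w b)
    (S : ℝ) (hS : S = ∑ b ∈ B.parts, w b) :
    ((T ∩ Pp).card : ℝ) / T.card
      = (∑ b ∈ B.parts, (w b / S) *
            ((((T.filter (fun q => q ∈ b.sym2)) ∩ (Pp.filter (fun q => q ∈ b.sym2))).card : ℝ)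
              / w b))
        / (∑ b ∈ B.parts, (w b / S) * (((T.filter (fun q => q ∈ b.sym2)).card : ℝ) / w b)) := by
  -- every pair in T lies in a unique block
  have huniq : ∀ q ∈ T, ∃! b, b ∈ B.parts ∧ q ∈ b.sym2 := by
    intro q hq
    rw [hT, clPairs, Finset.mem_filter, Finset.mem_sup] at hq
    obtain ⟨⟨c, hc, hqc⟩, _⟩ := hq
    obtain ⟨b, hb, hcb⟩ := hB c hc
    refine ⟨b, ⟨hb, Finset.mem_sym2_iff.mpr fun a ha =>
      hcb (Finset.mem_sym2_iff.mp hqc a ha)⟩, ?_⟩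
    rintro b' ⟨hb', hqb'⟩
    induction q with
    | _ x y =>
      exact B.eq_of_mem_parts hb' hb
        (Finset.mem_sym2_iff.mp hqb' x (Sym2.mem_mk_left x y))
        (Finset.mem_sym2_iff.mp (Finset.mem_sym2_iff.mpr fun a ha =>
          hcb (Finset.mem_sym2_iff.mp hqc a ha)) x (Sym2.mem_mk_left x y))
  have hsplit : ∀ U : Finset (Sym2 α), U ⊆ T →
      ∑ b ∈ B.parts, ((U.filter (fun q => q ∈ b.sym2)).card : ℝ) = U.card := by
    intro U hU
    have : ∀ b ∈ B.parts, ((U.filter (fun q => q ∈ b.sym2)).card : ℝ)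
        = ∑ q ∈ U, if q ∈ b.sym2 then (1 : ℝ) else 0 := by
      intro b _
      rw [Finset.card_filter]
      push_cast
      rfl
    rw [Finset.sum_congr rfl this, Finset.sum_comm]
    rw [show (U.card : ℝ) = ∑ q ∈ U, (1 : ℝ) by simp]
    refine Finset.sum_congr rfl fun q hq => ?_
    obtain ⟨b₀, ⟨hb₀, hqb₀⟩, hun⟩ := huniq q (hU hq)
    have hfilt : B.parts.filter (fun b => q ∈ b.sym2) = {b₀} := by
      ext b
      simp only [Finset.mem_filter, Finset.mem_singleton]
      constructor
      · rintro ⟨h1, h2⟩; exact hun b ⟨h1, h2⟩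
      · rintro rfl; exact ⟨hb₀, hqb₀⟩
    rw [← Finset.sum_filter, hfilt, Finset.sum_singleton]
  have hS0 : 0 < S := by
    obtain ⟨q, hq⟩ := hTpos
    obtain ⟨b₀, ⟨hb₀, _⟩, _⟩ := huniq q hq
    rw [hS]
    exact Finset.sum_pos' (fun b hb => (hw b hb).le) ⟨b₀, hb₀, hw b₀ hb₀⟩
  have hterm : ∀ (x : Finset α → ℝ), ∀ b ∈ B.parts,
      (w b / S) * (x b / w b) = x b / S := by
    intro x b hb
    have hwb : w b ≠ 0 := ne_of_gt (hw b hb)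
    have hSne : S ≠ 0 := ne_of_gt hS0
    field_simp
  rw [Finset.sum_congr rfl (hterm fun b =>
        (((T.filter (fun q => q ∈ b.sym2)) ∩ (Pp.filter (fun q => q ∈ b.sym2))).card : ℝ)),
      Finset.sum_congr rfl (hterm fun b => ((T.filter (fun q => q ∈ b.sym2)).card : ℝ))]
  have hinter : ∀ b : Finset α,
      (T.filter (fun q => q ∈ b.sym2)) ∩ (Pp.filter (fun q => q ∈ b.sym2))
        = (T ∩ Pp).filter (fun q => q ∈ b.sym2) := by
    intro b
    rw [Finset.filter_inter_distrib]
  simp_rw [hinter, div_eq_mul_inv, ← Finset.sum_mul, ← div_eq_mul_inv]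
  rw [hsplit (T ∩ Pp) Finset.inter_subset_left, hsplit T (subset_refl T)]
  have hT0 : (0 : ℝ) < T.card := by exact_mod_cast Finset.card_pos.mpr hTpos
  have h1 : (T.card : ℝ) ≠ 0 := ne_of_gt hT0
  have h2 : S ≠ 0 := ne_of_gt hS0
  rw [div_div_div_eq, mul_comm ((T ∩ Pp).card : ℝ) S, mul_div_mul_left _ _ h2]
end

section
/- Block sampling representation of precision: if blocks b are drawn from a partition 𝓑 of D (with every true cluster contained in a block) with probabilities proportional to p_b > 0, then P = E[ |𝒯_b ∩ 𝒫_b| / p_b ] / E[ ( |𝒫_b| + ½ |𝒫_b⁻| ) / p_b ], provided |𝒫| > 0. -/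
/-!
Weighting by `p_b` and dividing by `p_b` cancel, so both expectations are plain sums over the
blocks divided by `Σ p_b`. Every pair of `𝒯` lies inside exactly one block, so the numerator sums
to `|𝒯 ∩ 𝒫|`. A predicted pair either lies inside one block, or crosses exactly two blocks, each
counting it with weight `½`; so the denominator sums to `|𝒫|`.
-/

open Finset

lemma sum_weighted_div_sum_weighted {ι : Type*} (s : Finset ι) {w : ι → ℝ} (f g : ι → ℝ)
    (hw : ∀ i ∈ s, 0 < w i) :
    (∑ i ∈ s, (w i / ∑ j ∈ s, w j) * (f i / w i)) /
        (∑ i ∈ s, (w i / ∑ j ∈ s, w j) * (g i / w i)) =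
      (∑ i ∈ s, f i) / ∑ i ∈ s, g i := by
  have hweighted : ∀ h : ι → ℝ,
      ∑ i ∈ s, (w i / ∑ j ∈ s, w j) * (h i / w i) = (∑ i ∈ s, h i) / ∑ j ∈ s, w j := by
    intro h
    rw [sum_div]
    exact sum_congr rfl fun i hi => by field_simp [(hw i hi).ne']
  rw [hweighted, hweighted]
  rcases s.eq_empty_or_nonempty with rfl | hs
  · simp
  · exact div_div_div_cancel_right₀ (sum_pos hw hs).ne' _ _

lemma mem_clPairs {α : Type*} [DecidableEq α] {P : Finset (Finset α)} {q : Sym2 α} :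
    q ∈ clPairs P ↔ (∃ c ∈ P, q ∈ c.sym2) ∧ ¬ q.IsDiag := by
  simp [clPairs, Finset.mem_sup]

lemma Finset.ite_mem_sym2_add_half_ite_crossing {α : Type*} [DecidableEq α] {D b : Finset α}
    {x y : α} (hx : x ∈ D) (hy : y ∈ D) :
    (if s(x, y) ∈ b.sym2 then (1 : ℝ) else 0)
        + 1 / 2 * (if s(x, y) ∉ b.sym2 ∧ s(x, y) ∉ (D \ b).sym2 then 1 else 0)
      = 1 / 2 * ((if x ∈ b then 1 else 0) + (if y ∈ b then 1 else 0)) := by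
  by_cases hxb : x ∈ b <;> by_cases hyb : y ∈ b <;> norm_num [hx, hy, hxb, hyb]

namespace Finpartition

variable {α : Type*} [DecidableEq α] {D : Finset α} (P : Finpartition D)

lemma clPairs_parts_subset_sym2 : clPairs P.parts ⊆ D.sym2 := by
  intro q hq
  obtain ⟨⟨c, hc, hqc⟩, -⟩ := mem_clPairs.1 hq
  exact sym2_mono (P.le hc) hqc

lemma sum_ite_mem_eq_one {x : α} (hx : x ∈ D) :
    ∑ b ∈ P.parts, (if x ∈ b then (1 : ℝ) else 0) = 1 := by
  calc ∑ b ∈ P.parts, (if x ∈ b then (1 : ℝ) else 0)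
      = ∑ b ∈ P.parts, (if P.part x = b then (1 : ℝ) else 0) :=
        sum_congr rfl fun b hb => by simp only [P.part_eq_iff_mem hb]
    _ = 1 := by rw [sum_ite_eq, if_pos (P.part_mem.2 hx)]

lemma sum_ite_mem_sym2_eq_one {b₀ : Finset α} (hb₀ : b₀ ∈ P.parts) {q : Sym2 α}
    (hq : q ∈ b₀.sym2) :
    ∑ b ∈ P.parts, (if q ∈ b.sym2 then (1 : ℝ) else 0) = 1 := by
  induction q using Sym2.ind with | _ x y => ?_
  rw [mk_mem_sym2_iff] at hq
  have hmem : ∀ b ∈ P.parts, s(x, y) ∈ b.sym2 ↔ x ∈ b := fun b hb => by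
    rw [mk_mem_sym2_iff]
    exact ⟨And.left, fun hxb => ⟨hxb, P.eq_of_mem_parts hb₀ hb hq.1 hxb ▸ hq.2⟩⟩
  rw [sum_congr rfl fun b hb => if_congr (hmem b hb) rfl rfl, P.sum_ite_mem_eq_one (P.le hb₀ hq.1)]

lemma sum_ite_mem_sym2_add_half_ite_crossing_eq_one {q : Sym2 α} (hq : q ∈ D.sym2) :
    ∑ b ∈ P.parts, ((if q ∈ b.sym2 then (1 : ℝ) else 0)
        + 1 / 2 * (if q ∉ b.sym2 ∧ q ∉ (D \ b).sym2 then 1 else 0)) = 1 := by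
  induction q using Sym2.ind with | _ x y => ?_
  rw [mk_mem_sym2_iff] at hq
  rw [sum_congr rfl fun b _ => ite_mem_sym2_add_half_ite_crossing hq.1 hq.2, ← mul_sum,
    sum_add_distrib, P.sum_ite_mem_eq_one hq.1, P.sum_ite_mem_eq_one hq.2]
  norm_num

lemma sum_card_filter_mem_sym2 {X : Finset (Sym2 α)}
    (hX : ∀ q ∈ X, ∃ b ∈ P.parts, q ∈ b.sym2) :
    ∑ b ∈ P.parts, (#(X.filter (· ∈ b.sym2)) : ℝ) = #X := by
  simp_rw [← sum_boole]
  rw [sum_comm, card_eq_sum_ones, Nat.cast_sum, Nat.cast_one]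
  refine sum_congr rfl fun q hq => ?_
  obtain ⟨b₀, hb₀, hqb₀⟩ := hX q hq
  exact P.sum_ite_mem_sym2_eq_one hb₀ hqb₀

lemma sum_card_filter_mem_sym2_add_half_card_crossing {X : Finset (Sym2 α)} (hX : X ⊆ D.sym2) :
    ∑ b ∈ P.parts, ((#(X.filter (· ∈ b.sym2)) : ℝ)
        + 1 / 2 * #(X.filter fun q => q ∉ b.sym2 ∧ q ∉ (D \ b).sym2)) = #X := by
  simp_rw [← sum_boole, mul_sum, ← sum_add_distrib]
  rw [sum_comm, card_eq_sum_ones, Nat.cast_sum, Nat.cast_one]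
  exact sum_congr rfl fun q hq => P.sum_ite_mem_sym2_add_half_ite_crossing_eq_one (hX hq)

end Finpartition

theorem stmt11_general {α : Type*} [DecidableEq α] (D : Finset α) (C Cp B : Finpartition D)
    (hB : ∀ c ∈ C.parts, ∃ b ∈ B.parts, c ⊆ b)
    (T Pp : Finset (Sym2 α)) (hT : T = clPairs C.parts) (hPp : Pp = clPairs Cp.parts)
    (w : Finset α → ℝ) (hw : ∀ b ∈ B.parts, 0 < w b)
    (S : ℝ) (hS : S = ∑ b ∈ B.parts, w b) :
    ((T ∩ Pp).card : ℝ) / Pp.card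
      = (∑ b ∈ B.parts, (w b / S) *
            ((((T.filter (fun q => q ∈ b.sym2)) ∩ (Pp.filter (fun q => q ∈ b.sym2))).card : ℝ)
              / w b))
        / (∑ b ∈ B.parts, (w b / S) *
            ((((Pp.filter (fun q => q ∈ b.sym2)).card : ℝ)
                + (1 / 2) * ((Pp.filter (fun q => q ∉ b.sym2 ∧ q ∉ (D \ b).sym2)).card : ℝ))
              / w b)) := by
  have hTB : ∀ q ∈ T ∩ Pp, ∃ b ∈ B.parts, q ∈ b.sym2 := by
    intro q hq
    rw [hT, mem_inter, mem_clPairs] at hq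
    obtain ⟨⟨⟨c, hc, hqc⟩, -⟩, -⟩ := hq
    obtain ⟨b, hb, hcb⟩ := hB c hc
    exact ⟨b, hb, sym2_mono hcb hqc⟩
  have hPpD : Pp ⊆ D.sym2 := hPp ▸ Cp.clPairs_parts_subset_sym2
  simp_rw [← filter_inter_distrib]
  rw [hS, sum_weighted_div_sum_weighted _ _ _ hw, B.sum_card_filter_mem_sym2 hTB,
    B.sum_card_filter_mem_sym2_add_half_card_crossing hPpD]

theorem stmt11 {α : Type*} [DecidableEq α] (D : Finset α) (C Cp B : Finpartition D)
    (hB : ∀ c ∈ C.parts, ∃ b ∈ B.parts, c ⊆ b)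
    (T Pp : Finset (Sym2 α)) (hT : T = clPairs C.parts) (hPp : Pp = clPairs Cp.parts)
    (hPpos : Pp.Nonempty)
    (w : Finset α → ℝ) (hw : ∀ b ∈ B.parts, 0 < w b)
    (S : ℝ) (hS : S = ∑ b ∈ B.parts, w b) :
    ((T ∩ Pp).card : ℝ) / Pp.card
      = (∑ b ∈ B.parts, (w b / S) *
            ((((T.filter (fun q => q ∈ b.sym2)) ∩ (Pp.filter (fun q => q ∈ b.sym2))).card : ℝ)
              / w b))
        / (∑ b ∈ B.parts, (w b / S) *
            ((((Pp.filter (fun q => q ∈ b.sym2)).card : ℝ)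
                + (1 / 2) * ((Pp.filter (fun q => q ∉ b.sym2 ∧ q ∉ (D \ b).sym2)).card : ℝ))
              / w b)) :=
  stmt11_general D C Cp B hB T Pp hT hPp w hw S hS
end
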